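/- For every list I of n distinct integers, φ(I) = φ(st(I)), where st(I) is the standardization of I. -/

import Mathlib

/-- The minimum of `a :: l` (computed by folding `min`) is a member of `a :: l`. -/
lemma foldr_min_mem (a : ℤ) : ∀ l : List ℤ, l.foldr min a ∈ a :: l := by
  intro l
  induction l with
  | nil => simp
  | cons b l ih =>
    simp only [List.foldr_cons]
    rcases min_choice b (l.foldr min a) with h | h
    · rw [h]; simp
    · rw [h]
      rcases List.mem_cons.mp ih with h' | h'
      · simp [h']
      · simp [h']

/-- The planar binary tree `φ(I)` associated to a list `I` of (distinct) integers:
`φ` of the empty list is the empty tree `|`, and `φ(I) = φ(I₁) ∨ φ(I₂)` where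
`I = I₁ · (min I) · I₂` is the splitting of `I` at its minimal entry. -/
def phi : List ℤ → Tree Unit
  | [] => Tree.nil
  | a :: l =>
    Tree.node ()
      (phi ((a :: l).take ((a :: l).idxOf (l.foldr min a))))
      (phi ((a :: l).drop ((a :: l).idxOf (l.foldr min a) + 1)))
termination_by l => l.length
decreasing_by
  · have hm := foldr_min_mem a l
    have hk := List.idxOf_lt_length_of_mem hm
    simp only [List.length_take, List.length_cons] at *
    try simp only [List.foldr_attach] at *
    omega
  · simp only [List.length_drop, List.length_cons]
    omega

/-- The standardization of a list `I` of distinct integers: the list whose `j`-th entry is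
the (1-indexed) position of `I_j` in the increasing ordering of the entries of `I`. -/
def stdz (I : List ℤ) : List ℤ :=
  I.map (fun x => ((I.filter (fun y => y < x)).length : ℤ) + 1)

/-- `l` is (the list of values of) a permutation of `{1, …, n}`. -/
def IsPermList (n : ℕ) (l : List ℤ) : Prop :=
  l.Perm ((List.range n).map (fun k => (k : ℤ) + 1))

/-- `S_T`: the set of permutations `σ ∈ S_{|T|}` (identified with their lists of values
`(σ(1),…,σ(n))`) such that `φ(σ) = T`. -/
def STree (T : Tree Unit) : Set (List ℤ) :=
  {l | IsPermList T.numNodes l ∧ phi l = T}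

/-!
`φ(I)` depends only on the relative order of the entries of `I`: relabelling the entries by a
function that is strictly increasing on them commutes with taking the minimum, with locating it,
and with cutting the list there, so by induction it leaves `φ` unchanged. Standardization is such
a relabelling, `x ↦ 1 + #{y ∈ I | y < x}`.
-/

lemma foldr_min_map {f : ℤ → ℤ} (a : ℤ) :
    ∀ l : List ℤ, MonotoneOn f {x | x ∈ a :: l} → (l.map f).foldr min (f a) = f (l.foldr min a)
  | [], _ => rfl
  | b :: l, hf => by
    have hsub : a :: l ⊆ a :: b :: l := ((List.sublist_cons_self b l).cons₂ a).subset
    rw [List.map_cons, List.foldr_cons, foldr_min_map a l (hf.mono fun x hx => hsub hx),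
      List.foldr_cons, hf.map_min (by simp) (hsub (foldr_min_mem a l))]

lemma idxOf_map_of_injOn {α β : Type*} [DecidableEq α] [DecidableEq β] {f : α → β} {x : α} :
    ∀ {L : List α}, Set.InjOn f {y | y ∈ x :: L} → (L.map f).idxOf (f x) = L.idxOf x
  | [], _ => rfl
  | b :: L, hf => by
    by_cases hb : b = x
    · simp [hb]
    · have hsub : x :: L ⊆ x :: b :: L := ((List.sublist_cons_self b L).cons₂ x).subset
      have hfb : f b ≠ f x := fun h => hb (hf (by simp) (by simp) h)
      rw [List.map_cons, List.idxOf_cons_ne _ hfb, List.idxOf_cons_ne _ hb,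
        idxOf_map_of_injOn (hf.mono fun y hy => hsub hy)]

theorem phi_map_of_strictMonoOn {f : ℤ → ℤ} :
    ∀ {L : List ℤ}, StrictMonoOn f {x | x ∈ L} → phi (L.map f) = phi L
  | [], _ => rfl
  | a :: l, hf => by
    have hmin : (l.map f).foldr min (f a) = f (l.foldr min a) := foldr_min_map a l hf.monotoneOn
    have hidx : ((a :: l).map f).idxOf (f (l.foldr min a)) = (a :: l).idxOf (l.foldr min a) :=
      idxOf_map_of_injOn (hf.injOn.mono fun y hy =>
        List.cons_subset.2 ⟨foldr_min_mem a l, List.Subset.refl _⟩ hy)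
    rw [List.map_cons, phi, phi, hmin, ← List.map_cons, hidx, ← List.map_take, ← List.map_drop,
      phi_map_of_strictMonoOn (hf.mono fun y hy => List.take_subset _ _ hy),
      phi_map_of_strictMonoOn (hf.mono fun y hy => List.drop_subset _ _ hy)]
termination_by L => L.length
decreasing_by
  · have := List.idxOf_lt_length_of_mem (foldr_min_mem a l)
    simp only [List.length_take]
    omega
  · simp only [List.length_drop, List.length_cons]
    omega

lemma strictMonoOn_rank (I : List ℤ) :
    StrictMonoOn (fun x => ((I.filter (fun y => y < x)).length : ℤ) + 1) {x | x ∈ I} := by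
  intro x hx y _ hxy
  have hsub : (I.filter (fun z => z < x)).Sublist (I.filter (fun z => z < y)) :=
    I.monotone_filter_right fun z hz => by simp only [decide_eq_true_eq] at hz ⊢; omega
  have hne : I.filter (fun z => z < x) ≠ I.filter (fun z => z < y) := fun h => by
    have hxmem : x ∈ I.filter (fun z => z < y) := by simpa using ⟨hx, hxy⟩
    simp [← h] at hxmem
  have hlt := lt_of_le_of_ne hsub.length_le (mt hsub.eq_of_length hne)
  dsimp only
  omega

theorem phi_stdz_general (I : List ℤ) : phi I = phi (stdz I) :=
  (phi_map_of_strictMonoOn (strictMonoOn_rank I)).symm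

/-- For every list `I` of distinct integers, `φ(I) = φ(st(I))` where `st(I)` is the
standardization of `I`. -/
theorem phi_stdz (I : List ℤ) (hI : I.Nodup) : phi I = phi (stdz I) :=
  phi_stdz_general I
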